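/- Let M be an ATM. A pseudo-derivation t of M yields a derivation of M if and only if t satisfies all three conditions (I), (II), and (III). -/

import Mathlib

namespace SLPaper

/-- Terms of separation logic: variables or the constant `nil`. -/
inductive SLTerm (V : Type) where
  | var : V → SLTerm V
  | nil : SLTerm V
deriving DecidableEq

/-- Formulae of `SL_κ`: points-to atoms, predicate atoms, equalities,
disequalities, separating conjunctions and existential quantifications. -/
inductive SLForm (κ : ℕ) (V : Type) (P : Type) where
  | pts   : SLTerm V → (Fin κ → SLTerm V) → SLForm κ V P
  | pred  : P → List (SLTerm V) → SLForm κ V P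
  | eq    : SLTerm V → SLTerm V → SLForm κ V P
  | neq   : SLTerm V → SLTerm V → SLForm κ V P
  | star  : SLForm κ V P → SLForm κ V P → SLForm κ V P
  | ex    : V → SLForm κ V P → SLForm κ V P

variable {κ : ℕ} {V P Loc : Type}

/-- Interpretation of a term in a store. -/
def SLTerm.interp (nilL : Loc) (s : V → Loc) : SLTerm V → Loc
  | .var x => s x
  | .nil => nilL

/-- A heap: a finite partial map from locations to `κ`-tuples of locations,
with `nil` not allocated. -/
structure SLHeap (κ : ℕ) (Loc : Type) (nilL : Loc) where
  f : Loc → Option (Fin κ → Loc)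
  finite : {l | f l ≠ none}.Finite
  nil_not_dom : f nilL = none

def SLHeap.dom {nilL : Loc} (h : SLHeap κ Loc nilL) : Set Loc := {l | h.f l ≠ none}

/-- `HUnion h h1 h2` holds iff `h` is the disjoint union of `h1` and `h2`. -/
def HUnion {nilL : Loc} (h h1 h2 : SLHeap κ Loc nilL) : Prop :=
  h1.dom ∩ h2.dom = ∅ ∧ ∀ l, h.f l = (h1.f l).orElse (fun _ => h2.f l)

/-- Satisfaction of predicate-free formulae (predicate atoms are never satisfied). -/
def Sat [DecidableEq V] (nilL : Loc) :
    (V → Loc) → SLHeap κ Loc nilL → SLForm κ V P → Prop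
  | s, h, .pts t0 ts =>
      h.dom = {SLTerm.interp nilL s t0} ∧
      h.f (SLTerm.interp nilL s t0) = some (fun i => SLTerm.interp nilL s (ts i))
  | _, _, .pred _ _ => False
  | s, h, .eq t1 t2 => h.dom = ∅ ∧ SLTerm.interp nilL s t1 = SLTerm.interp nilL s t2
  | s, h, .neq t1 t2 => h.dom = ∅ ∧ SLTerm.interp nilL s t1 ≠ SLTerm.interp nilL s t2
  | s, h, .star φ1 φ2 =>
      ∃ h1 h2 : SLHeap κ Loc nilL, HUnion h h1 h2 ∧ Sat nilL s h1 φ1 ∧ Sat nilL s h2 φ2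
  | s, h, .ex x φ => ∃ ℓ : Loc, Sat nilL (Function.update s x ℓ) h φ

/-- The list of (occurrences of) predicate atoms of a formula, in left-to-right order. -/
def predAtoms : SLForm κ V P → List (P × List (SLTerm V))
  | .pred p a => [(p, a)]
  | .star φ1 φ2 => predAtoms φ1 ++ predAtoms φ2
  | .ex _ φ => predAtoms φ
  | _ => []

/-- A formula is predicate-free iff no predicate atom occurs in it. -/
def PredFree (φ : SLForm κ V P) : Prop := predAtoms φ = []

/-- Replace the `k`-th occurrence (counting from `n`, left to right) of a predicate
atom by `f k`; returns the new formula together with the updated counter. -/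
def replacePredsAux : SLForm κ V P → ℕ → (ℕ → SLForm κ V P) → SLForm κ V P × ℕ
  | .pred _ _, n, f => (f n, n + 1)
  | .star φ1 φ2, n, f =>
      let r1 := replacePredsAux φ1 n f
      let r2 := replacePredsAux φ2 r1.2 f
      (.star r1.1 r2.1, r2.2)
  | .ex x φ, n, f =>
      let r := replacePredsAux φ n f
      (.ex x r.1, r.2)
  | φ, n, _ => (φ, n)

/-- Replace the `k`-th occurrence of a predicate atom of `φ` by `f k`, for every `k`. -/
def replacePreds (φ : SLForm κ V P) (f : ℕ → SLForm κ V P) : SLForm κ V P :=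
  (replacePredsAux φ 0 f).1

/-- Free variables of a term. -/
def SLTerm.fv : SLTerm V → Set V
  | .var x => {x}
  | .nil => ∅

/-- Free variables of a formula. -/
def SLForm.fv : SLForm κ V P → Set V
  | .pts t ts => t.fv ∪ {v | ∃ i, v ∈ (ts i).fv}
  | .pred _ a => {v | ∃ t ∈ a, v ∈ t.fv}
  | .eq t1 t2 => t1.fv ∪ t2.fv
  | .neq t1 t2 => t1.fv ∪ t2.fv
  | .star φ1 φ2 => φ1.fv ∪ φ2.fv
  | .ex x φ => φ.fv \ {x}

def SLTerm.subst (σ : V → SLTerm V) : SLTerm V → SLTerm V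
  | .var x => σ x
  | .nil => .nil

/-- Substitution in a formula (bound variables are not substituted). -/
def SLForm.subst [DecidableEq V] (σ : V → SLTerm V) : SLForm κ V P → SLForm κ V P
  | .pts t ts => .pts (t.subst σ) (fun i => (ts i).subst σ)
  | .pred p a => .pred p (a.map (SLTerm.subst σ))
  | .eq t1 t2 => .eq (t1.subst σ) (t2.subst σ)
  | .neq t1 t2 => .neq (t1.subst σ) (t2.subst σ)
  | .star φ1 φ2 => .star (φ1.subst σ) (φ2.subst σ)
  | .ex x φ => .ex x (φ.subst (Function.update σ x (.var x)))

/-- Finite trees: a finite nonempty prefix-closed set of finite sequences of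
natural numbers, closed under taking smaller siblings, with a labeling function. -/
structure FinTree (α : Type) where
  nodes : Set (List ℕ)
  finite : nodes.Finite
  root_mem : [] ∈ nodes
  prefix_closed : ∀ w i, w ++ [i] ∈ nodes → w ∈ nodes
  sibling_closed : ∀ w (i j : ℕ), w ++ [i] ∈ nodes → j < i → w ++ [j] ∈ nodes
  label : List ℕ → α

/-- Relabeling of a tree. -/
def FinTree.relabel {α β : Type} (t : FinTree α) (f : List ℕ → β) : FinTree β :=
  ⟨t.nodes, t.finite, t.root_mem, t.prefix_closed, t.sibling_closed, f⟩

/-- The subtree of `t` rooted at `w`. -/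
def FinTree.subtree {α : Type} (t : FinTree α) (w : List ℕ) : FinTree α where
  nodes := {w' | w ++ w' ∈ t.nodes} ∪ {[]}
  finite := by
    apply Set.Finite.union _ (Set.finite_singleton _)
    have hinj : Set.InjOn (fun w' => w ++ w') ((fun w' => w ++ w') ⁻¹' t.nodes) := by
      intro a _ b _ hab
      simpa using hab
    exact Set.Finite.subset (Set.Finite.preimage hinj t.finite) (fun _ h => h)
  root_mem := Or.inr rfl
  prefix_closed := by
    rintro w' i (h | h)
    · exact Or.inl (t.prefix_closed (w ++ w') i (by simpa [List.append_assoc] using h))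
    · simp at h
  sibling_closed := by
    rintro w' i j (h | h) hj
    · have := t.sibling_closed (w ++ w') i j (by simpa [List.append_assoc] using h) hj
      exact Or.inl (by simpa [List.append_assoc] using this)
    · simp at h
  label := fun w' => t.label (w ++ w')

/-- A set of rules assigns to each predicate a set of rule bodies. -/
abbrev RuleSet (κ : ℕ) (V P : Type) := P → Set (SLForm κ V P)

-- The substitution replacing the parameters `x_1, …, x_n` (given by the
-- injection `paramOf`) of a rule by the actual arguments `args`.
open Classical in
noncomputable def argSubst (paramOf : ℕ → V) (args : List (SLTerm V)) (v : V) : SLTerm V :=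
  if h : ∃ j, j < args.length ∧ paramOf j = v then args.getD h.choose (.var v)
  else .var v

/-- `IsUnfoldingTree S paramOf a u`: `u` is an unfolding tree of the predicate
atom `a` with respect to the set of rules `S`. Each node is labeled by a pair of
a predicate atom and a formula obtained from a rule body by instantiating the
parameters, and there is a bijection between the occurrences of predicate atoms
of that formula and the children of the node, preserving the atoms. -/
def IsUnfoldingTree [DecidableEq V] (S : RuleSet κ V P) (paramOf : ℕ → V)
    (a : P × List (SLTerm V))
    (u : FinTree ((P × List (SLTerm V)) × SLForm κ V P)) : Prop :=
  (u.label []).1 = a ∧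
  ∀ w ∈ u.nodes,
    (∃ ρ ∈ S (u.label w).1.1,
        (u.label w).2 = SLForm.subst (argSubst paramOf (u.label w).1.2) ρ) ∧
    ∃ n : ℕ, (∀ i : ℕ, w ++ [i] ∈ u.nodes ↔ i < n) ∧
      ∃ hn : (predAtoms (u.label w).2).length = n,
        ∃ σ : Fin n ≃ Fin n,
          ∀ k : Fin n,
            (u.label (w ++ [(σ k : ℕ)])).1 =
              (predAtoms (u.label w).2).get (Fin.cast hn.symm k)

/-- `CharForm u φ`: `φ` is a characteristic formula of the unfolding tree `u`,
obtained by recursively replacing each occurrence of a predicate atom in the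
formula labeling the root by the characteristic formula of the subtree rooted
at the corresponding child, relative to some choice of an atom-preserving
bijection between occurrences of predicate atoms and children. -/
inductive CharForm : FinTree ((P × List (SLTerm V)) × SLForm κ V P) → SLForm κ V P → Prop where
  | mk (u : FinTree ((P × List (SLTerm V)) × SLForm κ V P)) (n : ℕ)
      (hch : ∀ i : ℕ, [i] ∈ u.nodes ↔ i < n)
      (hn : (predAtoms (u.label []).2).length = n)
      (σ : Fin n ≃ Fin n)
      (hσ : ∀ k : Fin n,
        ((u.subtree [(σ k : ℕ)]).label []).1 =
          (predAtoms (u.label []).2).get (Fin.cast hn.symm k))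
      (φs : Fin n → SLForm κ V P)
      (hrec : ∀ k : Fin n, CharForm (u.subtree [(σ k : ℕ)]) (φs k)) :
      CharForm u (replacePreds (u.label []).2
        (fun j => if h : j < n then φs ⟨j, h⟩ else (u.label []).2))

/-- `SatS S paramOf s h φ`: the structure `(s,h)` is an `S`-model of `φ`, i.e. it
satisfies some predicate-free formula obtained from `φ` by replacing each
occurrence of a predicate atom by the characteristic formula of one of its
unfolding trees w.r.t. `S`. -/
def SatS [DecidableEq V] {nilL : Loc} (S : RuleSet κ V P) (paramOf : ℕ → V)
    (s : V → Loc) (h : SLHeap κ Loc nilL) (φ : SLForm κ V P) : Prop :=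
  ∃ f : ℕ → SLForm κ V P,
    (∀ j : ℕ, ∀ hj : j < (predAtoms φ).length,
      ∃ u, IsUnfoldingTree S paramOf ((predAtoms φ).get ⟨j, hj⟩) u ∧ CharForm u (f j)) ∧
    Sat nilL s h (replacePreds φ f)

/-- No points-to atom occurs in the formula. -/
def NoPts : SLForm κ V P → Prop
  | .pts _ _ => False
  | .star φ1 φ2 => NoPts φ1 ∧ NoPts φ2
  | .ex _ φ => NoPts φ
  | _ => True

/-- A rule body is progressing (w.r.t. the first parameter `x1`): it has the form
`∃z1…∃zm. x1 ↦ (y1,…,yκ) * ψ` where `ψ` contains no points-to atom (the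
degenerate case of an empty `ψ` corresponds to a bare points-to atom). -/
inductive ProgBody (x1 : V) : SLForm κ V P → Prop where
  | base (ts : Fin κ → SLTerm V) (ψ : SLForm κ V P) (hψ : NoPts ψ) :
      ProgBody x1 (.star (.pts (.var x1) ts) ψ)
  | base0 (ts : Fin κ → SLTerm V) : ProgBody x1 (.pts (.var x1) ts)
  | ex (z : V) (φ : SLForm κ V P) : ProgBody x1 φ → ProgBody x1 (.ex z φ)

/-- A rule body is connected: it is progressing and moreover every occurrence of a
predicate atom in `ψ` has the form `q(y_i, u_1, …, u_{#q−1})`, where `y_i` is one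
of the fields of the points-to atom. -/
inductive ConnBody (x1 : V) : SLForm κ V P → Prop where
  | base (ts : Fin κ → SLTerm V) (ψ : SLForm κ V P) (hψ : NoPts ψ)
      (hc : ∀ pa ∈ predAtoms ψ, ∃ i : Fin κ, pa.2.head? = some (ts i)) :
      ConnBody x1 (.star (.pts (.var x1) ts) ψ)
  | base0 (ts : Fin κ → SLTerm V) : ConnBody x1 (.pts (.var x1) ts)
  | ex (z : V) (φ : SLForm κ V P) : ConnBody x1 φ → ConnBody x1 (.ex z φ)

/-- The list of existentially quantified variables in the prefix of a formula. -/
def exPrefix : SLForm κ V P → List V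
  | .ex z φ => z :: exPrefix φ
  | _ => []

/-- The matrix of a formula (after stripping the existential prefix). -/
def matrix : SLForm κ V P → SLForm κ V P
  | .ex _ φ => matrix φ
  | φ => φ

/-- A set of rules is established: for each rule `p(x⃗) ⇐ ∃z1…∃zm.ψ` and every
`S`-model `(s,h)` of `ψ`, the locations `s(z1),…,s(zm)` are all allocated. -/
def Established [DecidableEq V] (nilL : Loc) (S : RuleSet κ V P) (paramOf : ℕ → V) : Prop :=
  ∀ p ρ, ρ ∈ S p → ∀ (s : V → Loc) (h : SLHeap κ Loc nilL),
    SatS S paramOf s h (matrix ρ) → ∀ z ∈ exPrefix ρ, s z ∈ h.dom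

end SLPaper

namespace SLPaper

/-- An alternating Turing machine `M = (Q,Γ,δ,q0,g)`; moves are encoded by
booleans (`false` = `←`, `true` = `→`) and `g q = false` means that `q` is
existential (`∨`) while `g q = true` means that `q` is universal (`∧`). -/
structure ATM (Q Γ : Type) where
  blank : Γ
  delta : Set (Q × Γ × Q × Γ × Bool)
  write_ne_blank : ∀ τ ∈ delta, τ.2.2.2.1 ≠ blank
  q0 : Q
  g : Q → Bool

/-- A configuration `(q, w, i)`. -/
abbrev TMConfig (Q Γ : Type) := Q × (ℕ → Γ) × ℕ

/-- A transition `(q, a, q', b, μ)`. -/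
abbrev TMTrans (Q Γ : Type) := Q × Γ × Q × Γ × Bool

/-- The step relation of an ATM: `(q,w,i) →_{(q,a,q',b,μ)} (q',w[i←b],i^μ)`,
requiring `w(i) = a` and `i > 0` when `μ = ←`. -/
def ATM.Step {Q Γ : Type} (M : ATM Q Γ) (τ : TMTrans Q Γ) (c c' : TMConfig Q Γ) : Prop :=
  τ ∈ M.delta ∧ c.1 = τ.1 ∧ c.2.1 c.2.2 = τ.2.1 ∧ c'.1 = τ.2.2.1 ∧
  c'.2.1 = Function.update c.2.1 c.2.2 τ.2.2.2.1 ∧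
  ((τ.2.2.2.2 = true ∧ c'.2.2 = c.2.2 + 1) ∨
   (τ.2.2.2.2 = false ∧ 0 < c.2.2 ∧ c'.2.2 + 1 = c.2.2))

/-- Labels of derivation trees: branching nodes carry configurations, action
nodes carry triples `(a,b,μ)`. -/
abbrev DLabel (Q Γ : Type) := TMConfig Q Γ ⊕ (Γ × Γ × Bool)

/-- Labels of pseudo-derivation trees: branching nodes carry pairs `(q,i)`,
action nodes carry triples `(a,b,μ)`. -/
abbrev PLabel (Q Γ : Type) := (Q × ℕ) ⊕ (Γ × Γ × Bool)

/-- `IsDerivation M w0 t`: `t` is a derivation of `M` starting from the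
configuration `(q0, w0, 0)`. -/
def IsDerivation {Q Γ : Type} (M : ATM Q Γ) (w0 : ℕ → Γ) (t : FinTree (DLabel Q Γ)) : Prop :=
  t.label [] = Sum.inl (M.q0, w0, 0) ∧
  (∀ w ∈ t.nodes,
     if w.length % 2 = 0 then
       ∃ c : TMConfig Q Γ, t.label w = Sum.inl c ∧ {j | c.2.1 j ≠ M.blank}.Finite
     else ∃ act : Γ × Γ × Bool, t.label w = Sum.inr act ∧ act.2.1 ≠ M.blank) ∧
  ∀ w ∈ t.nodes, ∀ q tp i, t.label w = Sum.inl (q, tp, i) →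
    (M.g q = false →
      (∀ k, w ++ [k] ∈ t.nodes ↔ k = 0) ∧
      ∃ a b μ q', t.label (w ++ [0]) = Sum.inr (a, b, μ) ∧
        (q, a, q', b, μ) ∈ M.delta ∧
        (∀ k, w ++ [0, k] ∈ t.nodes ↔ k = 0) ∧
        ∃ c', t.label (w ++ [0, 0]) = Sum.inl c' ∧ M.Step (q, a, q', b, μ) (q, tp, i) c') ∧
    (M.g q = true →
      ∃ n, (∀ k, w ++ [k] ∈ t.nodes ↔ k < n) ∧
      ∃ e : Fin n ≃ {τ : TMTrans Q Γ // τ ∈ M.delta ∧ τ.1 = q ∧ τ.2.1 = tp i},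
        ∀ k : Fin n,
          t.label (w ++ [(k : ℕ)]) =
            Sum.inr ((e k).1.2.1, (e k).1.2.2.2.1, (e k).1.2.2.2.2) ∧
          (∀ m, w ++ [(k : ℕ), m] ∈ t.nodes ↔ m = 0) ∧
          ∃ c', t.label (w ++ [(k : ℕ), 0]) = Sum.inl c' ∧ M.Step (e k).1 (q, tp, i) c')

/-- `M` accepts the tape `w0` iff it admits a derivation starting from `(q0, w0, 0)`. -/
def ATM.Accepts {Q Γ : Type} (M : ATM Q Γ) (w0 : ℕ → Γ) : Prop :=
  ∃ t : FinTree (DLabel Q Γ), IsDerivation M w0 t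

/-- `IsPseudoDerivation M t`: `t` is a pseudo-derivation of `M`: the conditions
on derivations are relaxed by dropping all constraints on the tape contents and
on the positions of the head. -/
def IsPseudoDerivation {Q Γ : Type} (M : ATM Q Γ) (t : FinTree (PLabel Q Γ)) : Prop :=
  t.label [] = Sum.inl (M.q0, 0) ∧
  (∀ w ∈ t.nodes,
     if w.length % 2 = 0 then
       ∃ c : Q × ℕ, t.label w = Sum.inl c
     else ∃ act : Γ × Γ × Bool, t.label w = Sum.inr act ∧ act.2.1 ≠ M.blank) ∧
  ∀ w ∈ t.nodes, ∀ q i, t.label w = Sum.inl (q, i) →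
    (M.g q = false →
      (∀ k, w ++ [k] ∈ t.nodes ↔ k = 0) ∧
      ∃ a b μ q' j, t.label (w ++ [0]) = Sum.inr (a, b, μ) ∧
        (q, a, q', b, μ) ∈ M.delta ∧
        (∀ k, w ++ [0, k] ∈ t.nodes ↔ k = 0) ∧
        t.label (w ++ [0, 0]) = Sum.inl (q', j)) ∧
    (M.g q = true →
      ∃ n, (∀ k, w ++ [k] ∈ t.nodes ↔ k < n) ∧
      ∃ e : Fin n ≃ {τ : TMTrans Q Γ // τ ∈ M.delta ∧ τ.1 = q},
        ∀ k : Fin n,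
          t.label (w ++ [(k : ℕ)]) =
            Sum.inr ((e k).1.2.1, (e k).1.2.2.2.1, (e k).1.2.2.2.2) ∧
          (∀ m, w ++ [(k : ℕ), m] ∈ t.nodes ↔ m = 0) ∧
          ∃ j, t.label (w ++ [(k : ℕ), 0]) = Sum.inl ((e k).1.2.2.1, j))

/-- The tape contents at a node `w` of a pseudo-derivation, obtained by replaying,
from the empty tape, the write actions along the path from the root to `w`. -/
def tapeAt {Q Γ : Type} (M : ATM Q Γ) (t : FinTree (PLabel Q Γ)) (w : List ℕ) : ℕ → Γ :=
  (List.range (w.length / 2)).foldl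
    (fun tp k =>
      match t.label (w.take (2 * k)), t.label (w.take (2 * k + 1)) with
      | Sum.inl (_, i), Sum.inr (_, b, _) => Function.update tp i b
      | _, _ => tp)
    (fun _ => M.blank)

/-- The top-down relabeling of a pseudo-derivation into a (candidate) derivation:
the root `(q0,0)` becomes `(q0,ε,0)`, and each branching node `(q,i)` is labeled
by the configuration whose tape is determined by the actions above it. -/
def relabelTree {Q Γ : Type} (M : ATM Q Γ) (t : FinTree (PLabel Q Γ)) : FinTree (DLabel Q Γ) :=
  t.relabel (fun w =>
    match t.label w with
    | Sum.inl (q, i) => Sum.inl (q, tapeAt M t w, i)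
    | Sum.inr act => Sum.inr act)

/-- A pseudo-derivation yields a derivation iff its top-down relabeling is a
derivation of `M` starting from the empty tape. -/
def YieldsDerivation {Q Γ : Type} (M : ATM Q Γ) (t : FinTree (PLabel Q Γ)) : Prop :=
  IsDerivation M (fun _ => M.blank) (relabelTree M t)

/-- Condition (I): the position of the head changes according to the action
executed between adjacent configurations. -/
def CondI {Q Γ : Type} (M : ATM Q Γ) (t : FinTree (PLabel Q Γ)) : Prop :=
  ∀ (w : List ℕ) (k l : ℕ) (q : Q) (i : ℕ) (a b : Γ) (μ : Bool) (q' : Q) (i' : ℕ),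
    w ++ [k, l] ∈ t.nodes →
    t.label w = Sum.inl (q, i) →
    t.label (w ++ [k]) = Sum.inr (a, b, μ) →
    t.label (w ++ [k, l]) = Sum.inl (q', i') →
    (μ = true → i' = i + 1) ∧ (μ = false → i = i' + 1)

/-- Condition (II): the symbol read at a position is the symbol previously
written at that position, if no intermediate branching node visits it. -/
def CondII {Q Γ : Type} (M : ATM Q Γ) (t : FinTree (PLabel Q Γ)) : Prop :=
  ∀ (w v : List ℕ) (k' : ℕ) (q : Q) (i : ℕ) (a b : Γ) (μ : Bool)
    (q' : Q) (a' b' : Γ) (μ' : Bool),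
    v ≠ [] → (w ++ v) ∈ t.nodes → Even w.length → Even (w ++ v).length →
    t.label w = Sum.inl (q, i) →
    t.label (w ++ v.take 1) = Sum.inr (a, b, μ) →
    t.label (w ++ v) = Sum.inl (q', i) →
    (w ++ v) ++ [k'] ∈ t.nodes →
    t.label ((w ++ v) ++ [k']) = Sum.inr (a', b', μ') →
    (∀ u, u <+: v → u ≠ [] → u ≠ v → Even (w ++ u).length →
      ∀ (q'' : Q) (i'' : ℕ), t.label (w ++ u) = Sum.inl (q'', i'') → i'' ≠ i) →
    a' = b

/-- Condition (III): a symbol read at a position never written before (along the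
path from the root) must be the blank. -/
def CondIII {Q Γ : Type} (M : ATM Q Γ) (t : FinTree (PLabel Q Γ)) : Prop :=
  ∀ (w : List ℕ) (k : ℕ) (q : Q) (i : ℕ) (a b : Γ) (μ : Bool),
    w ++ [k] ∈ t.nodes →
    t.label w = Sum.inl (q, i) →
    t.label (w ++ [k]) = Sum.inr (a, b, μ) →
    (∀ u, u <+: w → u ≠ w → Even u.length →
      ∀ (q'' : Q) (i'' : ℕ), t.label u = Sum.inl (q'', i'') → i'' ≠ i) →
    a = M.blank

/-- An execution of length `n`: a sequence of configurations starting in the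
initial state, at head position `0`, on an almost-everywhere blank tape, where
consecutive configurations are related by the step relation via the
corresponding transitions. -/
def Execution {Q Γ : Type} (M : ATM Q Γ) (n : ℕ)
    (cs : ℕ → TMConfig Q Γ) (τs : ℕ → TMTrans Q Γ) : Prop :=
  (cs 0).1 = M.q0 ∧ (cs 0).2.2 = 0 ∧ {j | (cs 0).2.1 j ≠ M.blank}.Finite ∧
  ∀ k, k < n → M.Step (τs k) (cs k) (cs (k + 1))

/-- The length of the non-blank portion of a tape. -/
noncomputable def tapeLen {Q Γ : Type} (M : ATM Q Γ) (w : ℕ → Γ) : ℕ :=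
  sInf {n | ∀ j, n ≤ j → w j = M.blank}

/-- The tape containing the word `w` followed by blanks. -/
def wordTape {Γ : Type} (blank : Γ) (w : List Γ) : ℕ → Γ :=
  fun j => w.getD j blank

end SLPaper

/-!
The relabeled tree always has the shape of a derivation; what can fail is the step relation at
an action node. A step from `(q, w, i)` via `(a, b, μ)` to `(q', w[i ← b], j)` holds iff the head
moves as `μ` prescribes, which is condition (I), and `a = w i`. The tape at a node, read at `i`,
is the symbol written at the last ancestor whose head was at `i`, or blank if there is none; so
"every action reads the tape" splits into (II), for a read with such an ancestor, and (III), for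
a read without one.
-/

theorem List.forall_not_or_exists_longest_proper_prefix {α : Type*} (P : List α → Prop)
    (w : List α) :
    (∀ u, u <+: w → u ≠ w → ¬ P u) ∨
      ∃ u v, w = u ++ v ∧ v ≠ [] ∧ P u ∧ ∀ u', u' <+: v → u' ≠ [] → u' ≠ v → ¬ P (u ++ u') := by
  induction w using List.reverseRecOn with
  | nil => exact Or.inl fun u hu hne => absurd (List.prefix_nil.mp hu) hne
  | append_singleton w x ih =>
    by_cases hw : P w
    · refine Or.inr ⟨w, [x], rfl, by simp, hw, fun u' hu' hne hne' => ?_⟩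
      rcases List.prefix_cons_iff.mp hu' with rfl | ⟨r, rfl, hr⟩
      · exact absurd rfl hne
      · exact absurd (by rw [List.prefix_nil.mp hr]) hne'
    rcases ih with hnone | ⟨u, v, rfl, hv, hu, hlast⟩
    · refine Or.inl fun u hu hne => ?_
      rcases List.prefix_concat_iff.mp hu with rfl | hu
      · exact absurd rfl hne
      · rcases eq_or_ne u w with rfl | hne
        · exact hw
        · exact hnone u hu hne
    · refine Or.inr ⟨u, v ++ [x], by simp, by simp, hu, fun u' hu' hne hne' => ?_⟩
      rcases List.prefix_concat_iff.mp hu' with rfl | hu'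
      · exact absurd rfl hne'
      · rcases eq_or_ne u' v with rfl | hne''
        · exact hw
        · exact hlast u' hu' hne hne''

namespace SLPaper

theorem FinTree.mem_of_prefix {α : Type} (t : FinTree α) {u w : List ℕ} (h : u <+: w)
    (hw : w ∈ t.nodes) : u ∈ t.nodes := by
  obtain ⟨v, rfl⟩ := h
  induction v using List.reverseRecOn with
  | nil => simpa using hw
  | append_singleton v j ih => exact ih (t.prefix_closed (u ++ v) j (by simpa using hw))

variable {Q Γ : Type} {M : ATM Q Γ} {t : FinTree (PLabel Q Γ)}

theorem IsPseudoDerivation.exists_label_inl (ht : IsPseudoDerivation M t) {w : List ℕ}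
    (hw : w ∈ t.nodes) (he : Even w.length) : ∃ q i, t.label w = Sum.inl (q, i) := by
  have h := ht.2.1 w hw
  rw [if_pos (Nat.even_iff.mp he)] at h
  obtain ⟨⟨q, i⟩, h⟩ := h
  exact ⟨q, i, h⟩

theorem IsPseudoDerivation.exists_label_inr (ht : IsPseudoDerivation M t) {w : List ℕ}
    (hw : w ∈ t.nodes) (ho : ¬ Even w.length) :
    ∃ a b μ, t.label w = Sum.inr (a, b, μ) ∧ b ≠ M.blank := by
  have h := ht.2.1 w hw
  rw [if_neg (mt Nat.even_iff.mpr ho)] at h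
  obtain ⟨⟨a, b, μ⟩, h, hb⟩ := h
  exact ⟨a, b, μ, h, hb⟩

theorem IsPseudoDerivation.even_of_label_inl (ht : IsPseudoDerivation M t) {w : List ℕ}
    {q : Q} {i : ℕ} (hw : w ∈ t.nodes) (h : t.label w = Sum.inl (q, i)) : Even w.length := by
  by_contra ho
  obtain ⟨a, b, μ, h', -⟩ := ht.exists_label_inr hw ho
  simp [h] at h'

def tapeStep (c act : PLabel Q Γ) (tp : ℕ → Γ) : ℕ → Γ :=
  match c, act with
  | Sum.inl (_, i), Sum.inr (_, b, _) => Function.update tp i b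
  | _, _ => tp

theorem tapeAt_eq_foldl (w : List ℕ) :
    tapeAt M t w = (List.range (w.length / 2)).foldl
      (fun tp k => tapeStep (t.label (w.take (2 * k))) (t.label (w.take (2 * k + 1))) tp)
      (fun _ => M.blank) := rfl

theorem tapeAt_append_pair {w : List ℕ} (hw : Even w.length) (k l : ℕ) :
    tapeAt M t (w ++ [k, l]) = tapeStep (t.label w) (t.label (w ++ [k])) (tapeAt M t w) := by
  obtain ⟨m, hm⟩ : ∃ m, w.length = 2 * m := ⟨w.length / 2, by rcases hw with ⟨r, hr⟩; omega⟩
  have htake : ∀ j ≤ 2 * m, (w ++ [k, l]).take j = w.take j := fun j hj =>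
    List.take_append_of_le_length (by omega)
  have hw₀ : (w ++ [k, l]).take (2 * m) = w := by rw [htake _ le_rfl, ← hm, List.take_length]
  have hw₁ : (w ++ [k, l]).take (2 * m + 1) = w ++ [k] := by
    rw [← hm, show w ++ [k, l] = (w ++ [k]) ++ [l] by simp,
      show w.length + 1 = (w ++ [k]).length by simp, List.take_left]
  rw [tapeAt_eq_foldl, tapeAt_eq_foldl, show (w ++ [k, l]).length / 2 = m + 1 by simp; omega,
    hm, Nat.mul_div_cancel_left m two_pos, List.range_succ, List.foldl_append, List.foldl_cons,
    List.foldl_nil, hw₀, hw₁]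
  refine congrArg _ (List.foldl_ext _ _ _ fun tp j hj => ?_)
  have hj : j < m := List.mem_range.mp hj
  rw [htake _ (by omega), htake _ (by omega)]

theorem tapeAt_append_pair_of_write {w : List ℕ} {q : Q} {i : ℕ} {a b : Γ} {μ : Bool}
    (hw : Even w.length) (hq : t.label w = Sum.inl (q, i)) (k l : ℕ)
    (ha : t.label (w ++ [k]) = Sum.inr (a, b, μ)) :
    tapeAt M t (w ++ [k, l]) = Function.update (tapeAt M t w) i b := by
  rw [tapeAt_append_pair hw, hq, ha, tapeStep]

def HeadAt (t : FinTree (PLabel Q Γ)) (i : ℕ) (u : List ℕ) : Prop :=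
  Even u.length ∧ ∃ q, t.label u = Sum.inl (q, i)

theorem tapeAt_append_pair_apply_of_not_headAt {w : List ℕ} {j : ℕ} (hw : Even w.length)
    (hj : ¬ HeadAt t j w) (k l : ℕ) : tapeAt M t (w ++ [k, l]) j = tapeAt M t w j := by
  rw [tapeAt_append_pair hw]
  rcases hc : t.label w with ⟨q, i⟩ | _
  · rcases t.label (w ++ [k]) with _ | _
    · rfl
    · exact Function.update_of_ne (fun hji : j = i => hj ⟨hw, q, hji ▸ hc⟩) _ _
  · rfl

theorem tapeAt_append_apply_of_not_headAt {j : ℕ} : ∀ {w v : List ℕ}, Even w.length →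
    Even v.length → (∀ u, u <+: v → u ≠ v → ¬ HeadAt t j (w ++ u)) →
    tapeAt M t (w ++ v) j = tapeAt M t w j
  | _, [], _, _, _ => by rw [List.append_nil]
  | _, [_], _, hv, _ => absurd hv (by simp)
  | w, c :: e :: v, hw, hv, hno => by
    have hwce : Even (w ++ [c, e]).length := by simpa [Nat.even_add_one] using hw
    rw [show w ++ c :: e :: v = (w ++ [c, e]) ++ v by simp,
      tapeAt_append_apply_of_not_headAt hwce (by simpa [Nat.even_add_one] using hv)
        fun u hu hne => by simpa using hno (c :: e :: u) (by simpa using hu) (by simpa using hne),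
      tapeAt_append_pair_apply_of_not_headAt hw (by simpa using hno [] (by simp) (by simp))]

theorem tapeAt_apply_of_not_headAt {w : List ℕ} {j : ℕ} (hw : Even w.length)
    (hno : ∀ u, u <+: w → u ≠ w → ¬ HeadAt t j u) : tapeAt M t w j = M.blank :=
  tapeAt_append_apply_of_not_headAt (w := []) (v := w) ⟨0, rfl⟩ hw (by simpa using hno)

theorem tapeAt_append_apply_of_last_write {w v : List ℕ} {q : Q} {i : ℕ} {a b : Γ} {μ : Bool}
    (hw : Even w.length) (hwv : Even (w ++ v).length) (hv : v ≠ [])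
    (hq : t.label w = Sum.inl (q, i)) (ha : t.label (w ++ v.take 1) = Sum.inr (a, b, μ))
    (hno : ∀ u, u <+: v → u ≠ [] → u ≠ v → ¬ HeadAt t i (w ++ u)) :
    tapeAt M t (w ++ v) i = b := by
  rcases v with _ | ⟨c, _ | ⟨e, v⟩⟩
  · exact absurd rfl hv
  · simp [Nat.even_add_one, hw] at hwv
  · have hwce : Even (w ++ [c, e]).length := by simpa [Nat.even_add_one] using hw
    rw [show w ++ c :: e :: v = (w ++ [c, e]) ++ v by simp,
      tapeAt_append_apply_of_not_headAt hwce
        (by simpa [Nat.even_add_one, Nat.even_add, hw] using hwv)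
        fun u hu hne => by
          simpa using hno (c :: e :: u) (by simpa using hu) (by simp) (by simpa using hne),
      tapeAt_append_pair_of_write hw hq c e (by simpa using ha), Function.update_self]

theorem tapeAt_finite (w : List ℕ) : {j | tapeAt M t w j ≠ M.blank}.Finite := by
  rw [tapeAt_eq_foldl]
  refine List.foldlRecOn (motive := fun tp : ℕ → Γ => {j | tp j ≠ M.blank}.Finite) _ _
    (by simp) fun tp htp k _ => ?_
  rcases t.label (w.take (2 * k)) with ⟨_, i⟩ | _
  · rcases t.label (w.take (2 * k + 1)) with _ | ⟨_, b, _⟩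
    · exact htp
    · refine (htp.insert i).subset fun j hj => ?_
      by_cases hji : j = i
      · exact Or.inl hji
      · exact Or.inr (by simpa [tapeStep, Function.update_of_ne hji] using hj)
  · exact htp

variable (M t) in
def ReadsTape : Prop :=
  ∀ (w : List ℕ) (k : ℕ) (q : Q) (i : ℕ) (a b : Γ) (μ : Bool),
    w ++ [k] ∈ t.nodes → t.label w = Sum.inl (q, i) → t.label (w ++ [k]) = Sum.inr (a, b, μ) →
    a = tapeAt M t w i

theorem IsPseudoDerivation.readsTape_iff (ht : IsPseudoDerivation M t) :
    ReadsTape M t ↔ CondII M t ∧ CondIII M t := by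
  constructor
  · intro hread
    refine ⟨fun w v k' q i a b μ q' a' b' μ' hv _ hw hwv hq ha hq' hk' ha' hno => ?_,
      fun w k q i a b μ hk hq ha hno => ?_⟩
    · rw [hread _ _ _ _ _ _ _ hk' hq' ha']
      exact tapeAt_append_apply_of_last_write hw hwv hv hq ha
        fun u hu hne hne' ⟨he, _, hl⟩ => hno u hu hne hne' he _ _ hl rfl
    · rw [hread _ _ _ _ _ _ _ hk hq ha]
      exact tapeAt_apply_of_not_headAt (ht.even_of_label_inl (t.prefix_closed w k hk) hq)
        fun u hu hne ⟨he, _, hl⟩ => hno u hu hne he _ _ hl rfl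
  · rintro ⟨hII, hIII⟩ w k q i a b μ hk hq ha
    have hw := t.prefix_closed w k hk
    have hwe := ht.even_of_label_inl hw hq
    rcases List.forall_not_or_exists_longest_proper_prefix (HeadAt t i) w with
      hnone | ⟨u, v, rfl, hv, ⟨hu, q₀, hq₀⟩, hlast⟩
    · rw [tapeAt_apply_of_not_headAt hwe hnone]
      exact hIII w k q i a b μ hk hq ha
        fun u hu hne he _ _ hl heq => hnone u hu hne ⟨he, _, heq ▸ hl⟩
    · have hodd : ¬ Even (u ++ v.take 1).length := by
        obtain ⟨c, v, rfl⟩ := List.exists_cons_of_ne_nil hv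
        simpa [Nat.even_add_one] using hu
      obtain ⟨a₀, b₀, μ₀, ha₀, -⟩ := ht.exists_label_inr
        (t.mem_of_prefix ((List.prefix_append_right_inj u).2 (List.take_prefix 1 v)) hw) hodd
      rw [tapeAt_append_apply_of_last_write hu hwe hv hq₀ ha₀ hlast]
      exact hII u v k q₀ i a₀ b₀ μ₀ q a b μ hv hw hu hwe hq₀ ha₀ hq hk ha
        fun u' hu' hne hne' he _ _ hl heq => hlast u' hu' hne hne' ⟨he, _, heq ▸ hl⟩

theorem ATM.step_iff {q q' : Q} {a b : Γ} {μ : Bool} {tp tp' : ℕ → Γ} {i j : ℕ}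
    (hτ : (q, a, q', b, μ) ∈ M.delta) :
    M.Step (q, a, q', b, μ) (q, tp, i) (q', tp', j) ↔
      tp i = a ∧ tp' = Function.update tp i b ∧
        (μ = true → j = i + 1) ∧ (μ = false → i = j + 1) := by
  cases μ
  · simp only [ATM.Step, hτ, true_and, Bool.false_eq_true, false_and, false_or, false_implies,
      forall_const]
    exact and_congr_right fun _ => and_congr_right fun _ => ⟨by omega, by omega⟩
  · simp [ATM.Step, hτ]

theorem IsDerivation.exists_step {w₀ : ℕ → Γ} {d : FinTree (DLabel Q Γ)}
    (hd : IsDerivation M w₀ d) {w : List ℕ} {k : ℕ} {q : Q} {tp : ℕ → Γ} {i : ℕ} {a b : Γ}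
    {μ : Bool} (hk : w ++ [k] ∈ d.nodes) (hq : d.label w = Sum.inl (q, tp, i))
    (ha : d.label (w ++ [k]) = Sum.inr (a, b, μ)) :
    (∀ l, w ++ [k, l] ∈ d.nodes ↔ l = 0) ∧
      ∃ q' c', d.label (w ++ [k, 0]) = Sum.inl c' ∧ M.Step (q, a, q', b, μ) (q, tp, i) c' := by
  have hnode := hd.2.2 w (d.prefix_closed w k hk) q tp i hq
  cases hg : M.g q
  · obtain ⟨hch, a', b', μ', q', ha', -, hgch, c', hc', hstep⟩ := hnode.1 hg
    obtain rfl := (hch k).1 hk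
    obtain ⟨rfl, rfl, rfl⟩ : a = a' ∧ b = b' ∧ μ = μ' := by simpa [ha] using ha'
    exact ⟨hgch, q', c', hc', hstep⟩
  · obtain ⟨n, hch, e, he⟩ := hnode.2 hg
    obtain ⟨ha', hgch, c', hc', hstep⟩ := he ⟨k, (hch k).1 hk⟩
    generalize e ⟨k, (hch k).1 hk⟩ = τ at ha' hstep
    obtain ⟨⟨q₀, a', q', b', μ'⟩, hτ⟩ := τ
    obtain rfl : q₀ = q := hτ.2.1
    obtain ⟨rfl, rfl, rfl⟩ : a = a' ∧ b = b' ∧ μ = μ' := by simpa [ha] using ha'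
    exact ⟨hgch, q', c', hc', hstep⟩

theorem relabelTree_label_of_inr {w : List ℕ} {act : Γ × Γ × Bool}
    (h : t.label w = Sum.inr act) : (relabelTree M t).label w = Sum.inr act := by
  simp [relabelTree, FinTree.relabel, h]

theorem relabelTree_label_eq_inl_iff {w : List ℕ} {q : Q} {tp : ℕ → Γ} {i : ℕ} :
    (relabelTree M t).label w = Sum.inl (q, tp, i) ↔
      t.label w = Sum.inl (q, i) ∧ tp = tapeAt M t w := by
  simp only [relabelTree, FinTree.relabel]
  rcases t.label w with ⟨q₀, i₀⟩ | act
  · simp only [Sum.inl.injEq, Prod.mk.injEq]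
    tauto
  · simp

theorem relabelTree_label_of_inl {w : List ℕ} {q : Q} {i : ℕ} (h : t.label w = Sum.inl (q, i)) :
    (relabelTree M t).label w = Sum.inl (q, tapeAt M t w, i) :=
  relabelTree_label_eq_inl_iff.2 ⟨h, rfl⟩

theorem IsPseudoDerivation.step_tapeAt_iff (ht : IsPseudoDerivation M t) {w : List ℕ}
    {k l : ℕ} {q q' : Q} {i j : ℕ} {a b : Γ} {μ : Bool} (hw : w ∈ t.nodes)
    (hq : t.label w = Sum.inl (q, i)) (ha : t.label (w ++ [k]) = Sum.inr (a, b, μ))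
    (hτ : (q, a, q', b, μ) ∈ M.delta) :
    M.Step (q, a, q', b, μ) (q, tapeAt M t w, i) (q', tapeAt M t (w ++ [k, l]), j) ↔
      a = tapeAt M t w i ∧ (μ = true → j = i + 1) ∧ (μ = false → i = j + 1) := by
  rw [ATM.step_iff hτ, tapeAt_append_pair_of_write (ht.even_of_label_inl hw hq) hq k l ha]
  exact ⟨fun ⟨hread, _, hmove⟩ => ⟨hread.symm, hmove⟩,
    fun ⟨hread, hmove⟩ => ⟨hread.symm, rfl, hmove⟩⟩

theorem IsPseudoDerivation.exists_step_of_yieldsDerivation (ht : IsPseudoDerivation M t)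
    (hy : YieldsDerivation M t) {w : List ℕ} {k : ℕ} {q : Q} {i : ℕ} {a b : Γ} {μ : Bool}
    (hk : w ++ [k] ∈ t.nodes) (hq : t.label w = Sum.inl (q, i))
    (ha : t.label (w ++ [k]) = Sum.inr (a, b, μ)) :
    (∀ l, w ++ [k, l] ∈ t.nodes ↔ l = 0) ∧ ∃ q' j, t.label (w ++ [k, 0]) = Sum.inl (q', j) ∧
      a = tapeAt M t w i ∧ (μ = true → j = i + 1) ∧ (μ = false → i = j + 1) := by
  obtain ⟨hch, q', c', hc', hstep⟩ :=
    hy.exists_step hk (relabelTree_label_of_inl hq) (relabelTree_label_of_inr ha)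
  have hw := t.prefix_closed w k hk
  obtain ⟨q'', j, hj⟩ := ht.exists_label_inl ((hch 0).2 rfl)
    (by simpa [Nat.even_add_one] using ht.even_of_label_inl hw hq)
  rw [relabelTree_label_of_inl hj, Sum.inl.injEq] at hc'
  subst hc'
  obtain rfl : q'' = q' := hstep.2.2.2.1
  exact ⟨hch, q'', j, hj, (ht.step_tapeAt_iff hw hq ha hstep.1).1 hstep⟩

theorem IsPseudoDerivation.step_of_condI_of_readsTape (ht : IsPseudoDerivation M t)
    (hI : CondI M t) (hread : ReadsTape M t) {w : List ℕ} {k l : ℕ} {q q' : Q} {i j : ℕ}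
    {a b : Γ} {μ : Bool} (hmem : w ++ [k, l] ∈ t.nodes) (hq : t.label w = Sum.inl (q, i))
    (ha : t.label (w ++ [k]) = Sum.inr (a, b, μ)) (hq' : t.label (w ++ [k, l]) = Sum.inl (q', j))
    (hτ : (q, a, q', b, μ) ∈ M.delta) :
    M.Step (q, a, q', b, μ) (q, tapeAt M t w, i) (q', tapeAt M t (w ++ [k, l]), j) := by
  have hk := t.prefix_closed (w ++ [k]) l (by simpa using hmem)
  exact (ht.step_tapeAt_iff (t.prefix_closed w k hk) hq ha hτ).2
    ⟨hread w k q i a b μ hk hq ha, hI w k l q i a b μ q' j hmem hq ha hq'⟩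

theorem IsPseudoDerivation.isDerivation_relabelTree (ht : IsPseudoDerivation M t)
    (hI : CondI M t) (hread : ReadsTape M t) :
    IsDerivation M (fun _ => M.blank) (relabelTree M t) := by
  refine ⟨relabelTree_label_of_inl ht.1, fun w hw => ?_, fun w hw q tp i hl => ?_⟩
  · split_ifs with he
    · obtain ⟨q, i, h⟩ := ht.exists_label_inl hw (Nat.even_iff.2 he)
      exact ⟨_, relabelTree_label_of_inl h, tapeAt_finite w⟩
    · obtain ⟨a, b, μ, h, hb⟩ := ht.exists_label_inr hw (by rwa [Nat.even_iff])
      exact ⟨_, relabelTree_label_of_inr h, hb⟩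
  obtain ⟨hq, rfl⟩ := relabelTree_label_eq_inl_iff.1 hl
  have hnode := ht.2.2 w hw q i hq
  refine ⟨fun hg => ?_, fun hg => ?_⟩
  · obtain ⟨hch, a, b, μ, q', j, ha, hτ, hgch, hq'⟩ := hnode.1 hg
    exact ⟨hch, a, b, μ, q', relabelTree_label_of_inr ha, hτ, hgch, _, relabelTree_label_of_inl hq',
      ht.step_of_condI_of_readsTape hI hread ((hgch 0).2 rfl) hq ha hq' hτ⟩
  · obtain ⟨n, hch, e, he⟩ := hnode.2 hg
    -- Every transition from `q` labels a child, so all of them read `tapeAt M t w i`.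
    have hreads (τ : TMTrans Q Γ) :
        τ ∈ M.delta ∧ τ.1 = q ↔ τ ∈ M.delta ∧ τ.1 = q ∧ τ.2.1 = tapeAt M t w i := by
      refine ⟨fun h => ⟨h.1, h.2, ?_⟩, fun h => ⟨h.1, h.2.1⟩⟩
      have hk := (he (e.symm ⟨τ, h⟩)).1
      rw [Equiv.apply_symm_apply] at hk
      exact hread w _ q i _ _ _ ((hch _).2 (Fin.isLt _)) hq hk
    refine ⟨n, hch, e.trans (Equiv.subtypeEquivRight hreads), fun k => ?_⟩
    obtain ⟨ha, hgch, j, hq'⟩ := he k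
    refine ⟨relabelTree_label_of_inr ha, hgch, _, relabelTree_label_of_inl hq', ?_⟩
    change M.Step (e k).1 _ _
    generalize e k = τ at ha hq'
    obtain ⟨⟨q₀, a, q', b, μ⟩, hτ, rfl⟩ := τ
    exact ht.step_of_condI_of_readsTape hI hread ((hgch 0).2 rfl) hq ha hq' hτ

theorem IsPseudoDerivation.yieldsDerivation_iff (ht : IsPseudoDerivation M t) :
    YieldsDerivation M t ↔ CondI M t ∧ ReadsTape M t := by
  refine ⟨fun hy => ⟨fun w k l q i a b μ q' i' hmem hq ha hq' => ?_,
    fun w k q i a b μ hk hq ha => ?_⟩, fun ⟨hI, hread⟩ => ht.isDerivation_relabelTree hI hread⟩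
  · obtain ⟨hch, q'', j, hj, -, hmove⟩ := ht.exists_step_of_yieldsDerivation hy
      (t.prefix_closed (w ++ [k]) l (by simpa using hmem)) hq ha
    obtain rfl := (hch l).1 hmem
    obtain ⟨-, rfl⟩ : q'' = q' ∧ j = i' := by simpa [hj] using hq'
    exact hmove
  · obtain ⟨-, -, -, -, hread, -⟩ := ht.exists_step_of_yieldsDerivation hy hk hq ha
    exact hread

end SLPaper

open SLPaper

/-- Let `M` be an ATM. A pseudo-derivation `t` of `M` yields a
derivation of `M` if and only if `t` satisfies all three conditions (I), (II)
and (III). -/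
theorem stmt8 (Q Γ : Type) (M : ATM Q Γ) (t : FinTree (PLabel Q Γ))
    (ht : IsPseudoDerivation M t) :
    YieldsDerivation M t ↔ (CondI M t ∧ CondII M t ∧ CondIII M t) := by
  rw [ht.yieldsDerivation_iff, ht.readsTape_iff]
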